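/- arXiv:1901.02480 — 7 statements merged into one kernel-verified Lean document; each statement's English description precedes it below -/
import Mathlib

section
/- If 0 ≤ α < 1/(1+v_max), then for every admissible path v and every k ≥ 0, X(v,k) > 0. -/
/-!
Put `c := α (1 + v_max) ∈ [0, 1)`. By induction, `X(v,k) > 0` together with the growth floor
`X(v,k+1) ≥ (1 + c · min (v k) 0) · X(v,k)`, whose factor is positive because `c < 1` and
`v k > -1`. The floor propagates because the feedback coefficient `α (1 + v k)` never exceeds
`c (1 + c · min (v k) 0)`: a negative `v (k+1)` then removes at most the fraction
`c · |v (k+1)|` of `X(v,k+1)`.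
-/

/-- Account value `X(v,k)` for feedback gain `α`, initial value `X0`, path `v`:
`X(v,0)=X(v,1)=X0` and `X(v,k+1)=X(v,k)+α(1+v(k-1))v(k)X(v,k-1)` for `k ≥ 1`. -/
noncomputable def accountX (α X0 : ℝ) (v : ℕ → ℝ) : ℕ → ℝ
  | 0 => X0
  | 1 => X0
  | (k + 2) => accountX α X0 v (k + 1) + α * (1 + v k) * v (k + 1) * accountX α X0 v k

lemma one_add_mul_min_zero_pos {c w : ℝ} (hc0 : 0 ≤ c) (hc1 : c < 1) (hw : -1 ≤ w) :
    0 < 1 + c * min w 0 := by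
  have : -c ≤ c * min w 0 := by nlinarith [le_min hw (show (-1 : ℝ) ≤ 0 by norm_num)]
  linarith

lemma one_add_mul_min_zero_le_one {c : ℝ} (w : ℝ) (hc0 : 0 ≤ c) : 1 + c * min w 0 ≤ 1 := by
  nlinarith [min_le_right w 0]

lemma mul_one_add_le_mul_one_add_mul_min_zero {α vmax w : ℝ} (hα0 : 0 ≤ α)
    (hα : α * (1 + vmax) < 1) (hvmax : 0 < vmax) (hw1 : -1 ≤ w) (hw : w ≤ vmax) :
    α * (1 + w) ≤ α * (1 + vmax) * (1 + α * (1 + vmax) * min w 0) := by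
  rcases le_or_gt 0 w with hw0 | hw0
  · rw [min_eq_right hw0, mul_zero, add_zero, mul_one]
    gcongr
  · rw [min_eq_left hw0.le]
    -- `α (1 + w) - c (1 + c w) = α (w (1 - α (1 + vmax)²) - vmax)`
    nlinarith [mul_nonneg hα0 (mul_nonneg hvmax.le (by linarith : 0 ≤ 1 + w)),
      mul_nonneg hα0 (mul_nonneg (by linarith : 0 ≤ -w)
        (by nlinarith : 0 ≤ 1 + vmax - α * (1 + vmax) ^ 2))]

lemma one_add_mul_min_zero_mul_le_add {c a w x₀ x₁ l : ℝ} (hc : 0 ≤ c) (hx₀ : 0 < x₀)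
    (ha0 : 0 ≤ a) (hac : a ≤ c * l) (hx : l * x₀ ≤ x₁) :
    (1 + c * min w 0) * x₁ ≤ x₁ + a * w * x₀ := by
  have hm : c * min w 0 ≤ 0 := mul_nonpos_of_nonneg_of_nonpos hc (min_le_right w 0)
  calc (1 + c * min w 0) * x₁ = x₁ + c * min w 0 * x₁ := by ring
    _ ≤ x₁ + c * min w 0 * (l * x₀) := by gcongr _ + ?_; exact mul_le_mul_of_nonpos_left hx hm
    _ = x₁ + (c * l) * min w 0 * x₀ := by ring
    _ ≤ x₁ + a * min w 0 * x₀ := by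
        gcongr _ + ?_ * _
        exact mul_le_mul_of_nonpos_right hac (min_le_right w 0)
    _ ≤ x₁ + a * w * x₀ := by gcongr; exact min_le_left w 0

theorem accountX_pos_and_growth_floor {α X0 c : ℝ} {v : ℕ → ℝ} (hX0 : 0 < X0) (hc : 0 ≤ c)
    (hfloor : ∀ k, 0 < 1 + c * min (v k) 0) (hgain0 : ∀ k, 0 ≤ α * (1 + v k))
    (hgain : ∀ k, α * (1 + v k) ≤ c * (1 + c * min (v k) 0)) (k : ℕ) :
    0 < accountX α X0 v k ∧
      (1 + c * min (v k) 0) * accountX α X0 v k ≤ accountX α X0 v (k + 1) := by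
  induction k with
  | zero =>
    refine ⟨hX0, ?_⟩
    simpa [accountX] using mul_le_mul_of_nonneg_right
      (one_add_mul_min_zero_le_one (v 0) hc) hX0.le
  | succ k ih =>
    obtain ⟨hpos, hgrowth⟩ := ih
    exact ⟨(mul_pos (hfloor k) hpos).trans_le hgrowth,
      one_add_mul_min_zero_mul_le_add hc hpos (hgain0 k) (hgain k) hgrowth⟩

theorem sufficiency_theorem_general (vmin vmax α X0 : ℝ)
    (h1 : -1 < vmin) (h3 : 0 < vmax) (hX0 : 0 < X0)
    (hα0 : 0 ≤ α) (hα : α < 1 / (1 + vmax))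
    (v : ℕ → ℝ) (hv : ∀ k, vmin ≤ v k ∧ v k ≤ vmax) :
    ∀ k, 0 < accountX α X0 v k := by
  have hM : 0 < 1 + vmax := by linarith
  have hc1 : α * (1 + vmax) < 1 := (lt_div_iff₀ hM).mp hα
  have hc0 : 0 ≤ α * (1 + vmax) := mul_nonneg hα0 hM.le
  have hv1 : ∀ k, -1 ≤ v k := fun k => by linarith [(hv k).1]
  intro k
  refine (accountX_pos_and_growth_floor hX0 hc0
    (fun k => one_add_mul_min_zero_pos hc0 hc1 (hv1 k))
    (fun k => mul_nonneg hα0 (by linarith [hv1 k]))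
    (fun k => mul_one_add_le_mul_one_add_mul_min_zero hα0 hc1 h3 (hv1 k) (hv k).2) k).1

/-- Sufficiency Theorem: if `0 ≤ α < 1/(1+v_max)`, then along every admissible path
the account value is positive for all time. -/
theorem sufficiency_theorem (vmin vmax α X0 : ℝ)
    (h1 : -1 < vmin) (h2 : vmin < 0) (h3 : 0 < vmax) (hX0 : 0 < X0)
    (hα0 : 0 ≤ α) (hα : α < 1 / (1 + vmax))
    (v : ℕ → ℝ) (hv : ∀ k, vmin ≤ v k ∧ v k ≤ vmax) :
    ∀ k, 0 < accountX α X0 v k :=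
  sufficiency_theorem_general vmin vmax α X0 h1 h3 hX0 hα0 hα v hv
end

section
/- Suppose v_max > 1+2v_min. If α > α* := (v_max − v_min)/(|v_min|(1+v_max)²), then there exist an admissible path v and a stage k such that X(v,k) ≤ 0. -/
/-!
Take the path that sits at `v_max` at stage `0` and at `v_min` afterwards. Then `X₂ = s X₀` with
`s = 1 + α(1+v_max)v_min`, and from stage `1` on the account follows the linear recurrence
`X(k+2) = X(k+1) - e X(k)` with `e = α(1+v_min)|v_min|`. The bound `α > α*` is exactly
`s² - s + e > 0`, and together with `v_max > 1 + 2 v_min` it gives `s < 2e`. Hence the ratio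
`ρ = X₃/X₂ = (s-e)/s` lies below `1/2` and below both real roots of `r² - r + e`, if any.
Along a positive solution the ratio `r ↦ 1 - e/r` then drops by at least `δ = ρ² - ρ + e > 0`
at every step, so it cannot stay positive.
-/

theorem exists_nonpos_of_recurrence {x : ℕ → ℝ} {e ρ : ℝ}
    (hrec : ∀ n, x (n + 2) = x (n + 1) - e * x n) (he : 0 ≤ e)
    (hx : x 1 ≤ ρ * x 0) (hρ : ρ < 1 / 2) (hδ : 0 < ρ ^ 2 - ρ + e) :
    ∃ n, x n ≤ 0 := by
  set δ := ρ ^ 2 - ρ + e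
  by_contra! hpos
  have hratio : ∀ n : ℕ, x (n + 1) ≤ (ρ - n * δ) * x n := by
    intro n
    induction n with
    | zero => simpa using hx
    | succ n ih =>
      set c := ρ - n * δ
      have hc : 0 < c := pos_of_mul_pos_left ((hpos _).trans_le ih) (hpos n).le
      have hcρ : c ≤ ρ := sub_le_self ρ (by positivity)
      -- `c² - c + e - δ = (c - ρ)(c + ρ - 1) ≥ 0` because `c ≤ ρ < 1/2`
      have hstep : c - e ≤ c * (c - δ) := by
        nlinarith [mul_nonneg_of_nonpos_of_nonpos (sub_nonpos.2 hcρ)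
          (by linarith : c + ρ - 1 ≤ 0), mul_nonneg hδ.le (by linarith : (0 : ℝ) ≤ 1 - c)]
      have hmul : c * x (n + 2) ≤ c * ((c - δ) * x (n + 1)) :=
        calc c * x (n + 2) = c * x (n + 1) - e * (c * x n) := by rw [hrec]; ring
          _ ≤ c * x (n + 1) - e * x (n + 1) := by gcongr
          _ = (c - e) * x (n + 1) := by ring
          _ ≤ c * (c - δ) * x (n + 1) := by gcongr; exact (hpos _).le
          _ = c * ((c - δ) * x (n + 1)) := by ring
      have hnext : ρ - ((n + 1 : ℕ) : ℝ) * δ = c - δ := by push_cast; ring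
      rw [hnext]
      exact le_of_mul_le_mul_left hmul hc
  obtain ⟨n, hn⟩ := exists_nat_gt (ρ / δ)
  have hneg : ρ - n * δ ≤ 0 := by rw [div_lt_iff₀ hδ] at hn; linarith
  exact (hpos (n + 1)).not_ge ((hratio n).trans (mul_nonpos_of_nonpos_of_nonneg hneg (hpos n).le))

def maxThenMinPath (vmin vmax : ℝ) (k : ℕ) : ℝ := if k = 0 then vmax else vmin

theorem maxThenMinPath_zero (vmin vmax : ℝ) : maxThenMinPath vmin vmax 0 = vmax := rfl

theorem maxThenMinPath_succ (vmin vmax : ℝ) (k : ℕ) : maxThenMinPath vmin vmax (k + 1) = vmin := rfl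

theorem maxThenMinPath_mem_Icc {vmin vmax : ℝ} (h : vmin ≤ vmax) (k : ℕ) :
    vmin ≤ maxThenMinPath vmin vmax k ∧ maxThenMinPath vmin vmax k ≤ vmax := by
  cases k
  exacts [⟨h, le_rfl⟩, ⟨le_rfl, h⟩]

section maxThenMinPath

variable {vmin vmax α X0 : ℝ}

theorem accountX_maxThenMinPath_two :
    accountX α X0 (maxThenMinPath vmin vmax) 2 = (1 + α * (1 + vmax) * vmin) * X0 := by
  simp only [accountX, maxThenMinPath_zero, maxThenMinPath_succ]
  ring

theorem accountX_maxThenMinPath_three :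
    accountX α X0 (maxThenMinPath vmin vmax) 3 =
      (1 + α * (1 + vmax) * vmin - α * (1 + vmin) * -vmin) * X0 := by
  rw [accountX, accountX_maxThenMinPath_two]
  simp only [accountX, maxThenMinPath_succ]
  ring

theorem accountX_maxThenMinPath_add_three (n : ℕ) :
    accountX α X0 (maxThenMinPath vmin vmax) (n + 3) =
      accountX α X0 (maxThenMinPath vmin vmax) (n + 2) -
        α * (1 + vmin) * -vmin * accountX α X0 (maxThenMinPath vmin vmax) (n + 1) := by
  rw [accountX]
  simp only [maxThenMinPath_succ]
  ring

end maxThenMinPath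

theorem maxThenMin_sq_sub_add_pos {vmin vmax α : ℝ} (hαm : 0 < α * -vmin)
    (hα : vmax - vmin < α * -vmin * (1 + vmax) ^ 2) :
    0 < (1 + α * (1 + vmax) * vmin) ^ 2 - (1 + α * (1 + vmax) * vmin)
      + α * (1 + vmin) * -vmin := by
  have h : (1 + α * (1 + vmax) * vmin) ^ 2 - (1 + α * (1 + vmax) * vmin) + α * (1 + vmin) * -vmin
      = α * -vmin * (α * -vmin * (1 + vmax) ^ 2 - (vmax - vmin)) := by ring
  rw [h]
  exact mul_pos hαm (sub_pos.2 hα)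

theorem maxThenMin_lt_two_mul {vmin vmax α : ℝ} (h1 : -1 < vmin) (hgap : 1 + 2 * vmin < vmax)
    (hα : vmax - vmin < α * -vmin * (1 + vmax) ^ 2) :
    1 + α * (1 + vmax) * vmin < 2 * (α * (1 + vmin) * -vmin) := by
  set w := 3 + vmax + 2 * vmin
  have hw : 0 < w := by linarith
  -- `(vmax - vmin) w - (1 + vmax)² = (1 + vmin)(vmax - 1 - 2 vmin)`
  have hsq : (1 + vmax) ^ 2 < α * -vmin * w * (1 + vmax) ^ 2 :=
    calc (1 + vmax) ^ 2 ≤ (vmax - vmin) * w := by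
          nlinarith [mul_pos (by linarith : (0 : ℝ) < 1 + vmin) (by linarith : 0 < vmax - 1 - 2 * vmin)]
      _ < α * -vmin * (1 + vmax) ^ 2 * w := by gcongr
      _ = α * -vmin * w * (1 + vmax) ^ 2 := by ring
  have hone : 1 < α * -vmin * w := lt_of_mul_lt_mul_right (by rwa [one_mul]) (sq_nonneg _)
  linarith

theorem exists_accountX_maxThenMinPath_nonpos {vmin vmax α X0 : ℝ} (hX0 : 0 ≤ X0)
    (he : 0 < α * (1 + vmin) * -vmin)
    (hhalf : 1 + α * (1 + vmax) * vmin < 2 * (α * (1 + vmin) * -vmin))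
    (hroots : 0 < (1 + α * (1 + vmax) * vmin) ^ 2 - (1 + α * (1 + vmax) * vmin)
      + α * (1 + vmin) * -vmin) :
    ∃ k, accountX α X0 (maxThenMinPath vmin vmax) k ≤ 0 := by
  set s := 1 + α * (1 + vmax) * vmin
  set e := α * (1 + vmin) * -vmin
  rcases le_or_gt s 0 with hs | hs
  · exact ⟨2, accountX_maxThenMinPath_two ▸ mul_nonpos_of_nonpos_of_nonneg hs hX0⟩
  have hratio : accountX α X0 (maxThenMinPath vmin vmax) 3 =
      (s - e) / s * accountX α X0 (maxThenMinPath vmin vmax) 2 := by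
    rw [accountX_maxThenMinPath_two, accountX_maxThenMinPath_three]
    change (s - e) * X0 = (s - e) / s * (s * X0)
    field_simp
  have hρ : (s - e) / s < 1 / 2 := by rw [div_lt_iff₀ hs]; linarith
  have hδ : 0 < ((s - e) / s) ^ 2 - (s - e) / s + e := by
    have hδ_eq : ((s - e) / s) ^ 2 - (s - e) / s + e = e * (s ^ 2 - s + e) / s ^ 2 := by
      field_simp
      ring
    rw [hδ_eq]
    exact div_pos (mul_pos he hroots) (pow_pos hs 2)
  obtain ⟨n, hn⟩ := exists_nonpos_of_recurrence
    (x := fun n ↦ accountX α X0 (maxThenMinPath vmin vmax) (n + 2))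
    (fun n ↦ accountX_maxThenMinPath_add_three (n + 1)) he.le hratio.le hρ hδ
  exact ⟨n + 2, hn⟩

theorem necessity_nonoscillatory_general (vmin vmax α X0 : ℝ)
    (h1 : -1 < vmin) (h2 : vmin < 0) (hX0 : 0 < X0)
    (hgap : vmax > 1 + 2 * vmin)
    (hα : α > (vmax - vmin) / (|vmin| * (1 + vmax) ^ 2)) :
    ∃ v : ℕ → ℝ, (∀ k, vmin ≤ v k ∧ v k ≤ vmax) ∧ ∃ k, accountX α X0 v k ≤ 0 := by
  have hvmax : 0 < 1 + vmax := by linarith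
  have hα' : vmax - vmin < α * -vmin * (1 + vmax) ^ 2 := by
    rw [abs_of_neg h2, gt_iff_lt, div_lt_iff₀ (mul_pos (neg_pos.2 h2) (pow_pos hvmax 2))] at hα
    linarith
  have hαm : 0 < α * -vmin :=
    pos_of_mul_pos_left ((sub_pos.2 (by linarith)).trans hα') (sq_nonneg _)
  have he : 0 < α * (1 + vmin) * -vmin := by
    linarith [mul_pos hαm (by linarith : (0 : ℝ) < 1 + vmin)]
  exact ⟨_, maxThenMinPath_mem_Icc (by linarith), exists_accountX_maxThenMinPath_nonpos hX0.le he
    (maxThenMin_lt_two_mul h1 hgap hα') (maxThenMin_sq_sub_add_pos hαm hα')⟩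

/-- Necessity (nonoscillatory case): if `v_max > 1 + 2 v_min` and
`α > α* = (v_max − v_min)/(|v_min|(1+v_max)²)`, then some admissible path leads
to a nonpositive account value at some stage. -/
theorem necessity_nonoscillatory (vmin vmax α X0 : ℝ)
    (h1 : -1 < vmin) (h2 : vmin < 0) (h3 : 0 < vmax) (hX0 : 0 < X0)
    (hα0 : 0 ≤ α) (hgap : vmax > 1 + 2 * vmin)
    (hα : α > (vmax - vmin) / (|vmin| * (1 + vmax) ^ 2)) :
    ∃ v : ℕ → ℝ, (∀ k, vmin ≤ v k ∧ v k ≤ vmax) ∧ ∃ k, accountX α X0 v k ≤ 0 :=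
  necessity_nonoscillatory_general vmin vmax α X0 h1 h2 hX0 hgap hα
end

section
/- Suppose v_max ≤ 1+2v_min. If α > α_s := 1/(4|v_min|(1+v_min)), then there exist an admissible path v and a stage k such that X(v,k) ≤ 0. -/
section LinearRecurrence

variable {x : ℕ → ℝ}

lemma succ_le_one_sub_mul_of_recurrence {δ : ℝ} (hδ : 0 ≤ δ)
    (hrec : ∀ n, x (n + 2) = x (n + 1) - (1 / 4 + δ) * x n)
    (hpos : ∀ n, 0 < x n) (h10 : x 1 ≤ x 0) (n : ℕ) :
    x (n + 1) ≤ (1 - n * δ) * x n := by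
  induction n with
  | zero => simpa using h10
  | succ n ih =>
    have hnδ : 0 ≤ (n : ℝ) * δ := by positivity
    have hquad : ((n : ℝ) + 1) * δ * (1 - n * δ) ≤ 1 / 4 + δ := by
      nlinarith [sq_nonneg ((n : ℝ) * δ - 1 / 2), mul_nonneg hnδ hδ]
    have key : ((n : ℝ) + 1) * δ * x (n + 1) ≤ (1 / 4 + δ) * x n :=
      calc ((n : ℝ) + 1) * δ * x (n + 1)
          ≤ ((n : ℝ) + 1) * δ * ((1 - n * δ) * x n) := by gcongr
        _ = ((n : ℝ) + 1) * δ * (1 - n * δ) * x n := by ring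
        _ ≤ (1 / 4 + δ) * x n := by gcongr; exact (hpos n).le
    rw [hrec n]
    push_cast
    linarith

lemma exists_nonpos_of_recurrence_s2 {c : ℝ} (hc : c < -(1 / 4))
    (hrec : ∀ n, x (n + 2) = x (n + 1) + c * x n) (h10 : x 1 ≤ x 0) :
    ∃ n, x n ≤ 0 := by
  by_contra! hpos
  set δ := -c - 1 / 4 with hδ_def
  have hδ : 0 < δ := by linarith
  have hratio := succ_le_one_sub_mul_of_recurrence hδ.le
    (fun n => by rw [hrec n, hδ_def]; ring) hpos h10
  obtain ⟨n, hn⟩ := exists_nat_gt (1 / δ)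
  have hnδ : 1 < (n : ℝ) * δ := by rwa [div_lt_iff₀ hδ] at hn
  have := hratio n
  nlinarith [hpos n, hpos (n + 1)]

end LinearRecurrence

lemma mul_one_add_mul_lt_neg_quarter {α v : ℝ} (h1 : -1 < v) (h2 : v < 0)
    (hα : α > 1 / (4 * |v| * (1 + v))) :
    α * (1 + v) * v < -(1 / 4) := by
  rw [abs_of_neg h2, gt_iff_lt, div_lt_iff₀ (by nlinarith)] at hα
  linarith

theorem necessity_oscillatory_general (vmin vmax α X0 : ℝ)
    (h1 : -1 < vmin) (h2 : vmin < 0) (h3 : 0 < vmax)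
    (hα : α > 1 / (4 * |vmin| * (1 + vmin))) :
    ∃ v : ℕ → ℝ, (∀ k, vmin ≤ v k ∧ v k ≤ vmax) ∧ ∃ k, accountX α X0 v k ≤ 0 :=
  ⟨fun _ => vmin, fun _ => ⟨le_rfl, (h2.trans h3).le⟩,
    exists_nonpos_of_recurrence_s2 (mul_one_add_mul_lt_neg_quarter h1 h2 hα)
      (fun _ => rfl) le_rfl⟩

/-- Necessity (oscillatory case): if `v_max ≤ 1 + 2 v_min` and
`α > α_s = 1/(4|v_min|(1+v_min))`, then some admissible path leads to a
nonpositive account value at some stage. -/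
theorem necessity_oscillatory (vmin vmax α X0 : ℝ)
    (h1 : -1 < vmin) (h2 : vmin < 0) (h3 : 0 < vmax) (hX0 : 0 < X0)
    (hα0 : 0 ≤ α) (hgap : vmax ≤ 1 + 2 * vmin)
    (hα : α > 1 / (4 * |vmin| * (1 + vmin))) :
    ∃ v : ℕ → ℝ, (∀ k, vmin ≤ v k ∧ v k ≤ vmax) ∧ ∃ k, accountX α X0 v k ≤ 0 :=
  necessity_oscillatory_general vmin vmax α X0 h1 h2 h3 hα
end

section
/- Suppose 0 ≤ α < α_s := 1/(4|v_min|(1+v_min)), so that θ := 4α v_min(1+v_min) + 1 > 0. Then for every k ≥ 2, X(v*,k) = (X_0/(2√θ))·(λ₊^{k-1}·g₊ + λ₋^{k-1}·g₋), where λ_± := (1 ± √θ)/2 and g_± := √θ ± (2α(1+v_max)v_min + 1). -/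
/-- The distinguished path: `v*(0) = v_max` and `v*(k) = v_min` for `k ≥ 1`. -/
noncomputable def vstar (vmin vmax : ℝ) : ℕ → ℝ := fun k => if k = 0 then vmax else vmin

/-! After its first step, `X(v*, ·)` obeys the constant-coefficient recurrence
`x (n+2) = x (n+1) + c x n` with `c = α v_min (1 + v_min)`, whose characteristic roots are
`λ± = (1 ± √θ)/2` since `θ = 1 + 4c`; the coefficients `X0 g±/(2√θ)` are fitted to the two
initial values `X(v*,1) = X0` and `X(v*,2) = (1 + α(1+v_max)v_min) X0`. -/

theorem eq_mul_pow_add_mul_pow_of_recurrence {R : Type*} [CommRing R] {u : ℕ → R}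
    {a b p q A B : R} (hp : p ^ 2 = a * p + b) (hq : q ^ 2 = a * q + b)
    (hu : ∀ n, u (n + 2) = a * u (n + 1) + b * u n)
    (h0 : u 0 = A + B) (h1 : u 1 = A * p + B * q) (n : ℕ) :
    u n = A * p ^ n + B * q ^ n := by
  induction n using Nat.twoStepInduction with
  | zero => simpa using h0
  | one => simpa using h1
  | more n ih₀ ih₁ =>
    rw [hu, ih₀, ih₁]
    linear_combination (-A * p ^ n) * hp - (B * q ^ n) * hq

theorem sq_half_one_add_eq {K : Type*} [Field K] [NeZero (2 : K)] {s c : K}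
    (hs : s ^ 2 = 4 * c + 1) : ((1 + s) / 2) ^ 2 = (1 + s) / 2 + c := by
  field_simp
  linear_combination hs

theorem sq_half_one_sub_eq {K : Type*} [Field K] [NeZero (2 : K)] {s c : K}
    (hs : s ^ 2 = 4 * c + 1) : ((1 - s) / 2) ^ 2 = (1 - s) / 2 + c := by
  field_simp
  linear_combination hs

section accountX

variable (α X0 vmin vmax : ℝ)

theorem accountX_vstar_two :
    accountX α X0 (vstar vmin vmax) 2 = (1 + α * (1 + vmax) * vmin) * X0 := by
  simp only [accountX, vstar, if_true, Nat.add_one_ne_zero, if_false]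
  ring

theorem accountX_vstar_add_three (n : ℕ) :
    accountX α X0 (vstar vmin vmax) (n + 3) =
      1 * accountX α X0 (vstar vmin vmax) (n + 2) +
        α * vmin * (1 + vmin) * accountX α X0 (vstar vmin vmax) (n + 1) := by
  rw [accountX]
  simp only [vstar, Nat.add_one_ne_zero, if_false]
  ring

theorem accountX_vstar_succ {s : ℝ} (hs : s ^ 2 = 4 * (α * vmin * (1 + vmin)) + 1)
    (hs0 : s ≠ 0) (n : ℕ) :
    accountX α X0 (vstar vmin vmax) (n + 1) =
      X0 / (2 * s) * (((1 + s) / 2) ^ n * (s + (2 * α * (1 + vmax) * vmin + 1)) +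
        ((1 - s) / 2) ^ n * (s - (2 * α * (1 + vmax) * vmin + 1))) := by
  have h_one : accountX α X0 (vstar vmin vmax) 1 =
      X0 / (2 * s) * (s + (2 * α * (1 + vmax) * vmin + 1)) +
        X0 / (2 * s) * (s - (2 * α * (1 + vmax) * vmin + 1)) := by
    rw [accountX]
    field_simp
    ring
  have h_two : accountX α X0 (vstar vmin vmax) 2 =
      X0 / (2 * s) * (s + (2 * α * (1 + vmax) * vmin + 1)) * ((1 + s) / 2) +
        X0 / (2 * s) * (s - (2 * α * (1 + vmax) * vmin + 1)) * ((1 - s) / 2) := by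
    rw [accountX_vstar_two]
    field_simp
    ring
  rw [eq_mul_pow_add_mul_pow_of_recurrence (u := fun n ↦ accountX α X0 (vstar vmin vmax) (n + 1))
    (by simpa using sq_half_one_add_eq hs) (by simpa using sq_half_one_sub_eq hs)
    (accountX_vstar_add_three α X0 vmin vmax) h_one h_two n]
  ring

end accountX

theorem theta_pos_of_lt_alphaS {vmin α : ℝ} (h1 : -1 < vmin) (h2 : vmin < 0)
    (hα : α < 1 / (4 * |vmin| * (1 + vmin))) : 0 < 4 * α * vmin * (1 + vmin) + 1 := by
  rw [abs_of_neg h2] at hα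
  have hD : 0 < 4 * -vmin * (1 + vmin) := by nlinarith
  linarith [(lt_div_iff₀ hD).mp hα]

theorem closed_form_generic_general (vmin vmax α X0 : ℝ)
    (h1 : -1 < vmin) (h2 : vmin < 0)
    (hα : α < 1 / (4 * |vmin| * (1 + vmin))) :
    0 < 4 * α * vmin * (1 + vmin) + 1 ∧
    ∀ k ≥ 2,
      accountX α X0 (vstar vmin vmax) k =
        X0 / (2 * Real.sqrt (4 * α * vmin * (1 + vmin) + 1)) *
          (((1 + Real.sqrt (4 * α * vmin * (1 + vmin) + 1)) / 2) ^ (k - 1) *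
              (Real.sqrt (4 * α * vmin * (1 + vmin) + 1) + (2 * α * (1 + vmax) * vmin + 1)) +
            ((1 - Real.sqrt (4 * α * vmin * (1 + vmin) + 1)) / 2) ^ (k - 1) *
              (Real.sqrt (4 * α * vmin * (1 + vmin) + 1) - (2 * α * (1 + vmax) * vmin + 1))) := by
  have hθ := theta_pos_of_lt_alphaS h1 h2 hα
  refine ⟨hθ, fun k hk ↦ ?_⟩
  obtain ⟨n, rfl⟩ : ∃ n, k = n + 1 := ⟨k - 1, by omega⟩
  have hs : Real.sqrt (4 * α * vmin * (1 + vmin) + 1) ^ 2 = 4 * (α * vmin * (1 + vmin)) + 1 := by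
    rw [Real.sq_sqrt hθ.le]
    ring
  exact accountX_vstar_succ α X0 vmin vmax hs (Real.sqrt_pos.mpr hθ).ne' n

/-- Closed form for `X(v*,k)` in the generic (nonsingular) case `0 ≤ α < α_s`:
with `θ := 4 α v_min (1+v_min) + 1 > 0`, `λ± := (1 ± √θ)/2` and
`g± := √θ ± (2α(1+v_max)v_min + 1)`, for `k ≥ 2` we have
`X(v*,k) = (X0/(2√θ)) (λ₊^{k-1} g₊ + λ₋^{k-1} g₋)`. -/
theorem closed_form_generic (vmin vmax α X0 : ℝ)
    (h1 : -1 < vmin) (h2 : vmin < 0) (h3 : 0 < vmax) (hX0 : 0 < X0)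
    (hα0 : 0 ≤ α) (hα : α < 1 / (4 * |vmin| * (1 + vmin))) :
    0 < 4 * α * vmin * (1 + vmin) + 1 ∧
    ∀ k ≥ 2,
      accountX α X0 (vstar vmin vmax) k =
        X0 / (2 * Real.sqrt (4 * α * vmin * (1 + vmin) + 1)) *
          (((1 + Real.sqrt (4 * α * vmin * (1 + vmin) + 1)) / 2) ^ (k - 1) *
              (Real.sqrt (4 * α * vmin * (1 + vmin) + 1) + (2 * α * (1 + vmax) * vmin + 1)) +
            ((1 - Real.sqrt (4 * α * vmin * (1 + vmin) + 1)) / 2) ^ (k - 1) *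
              (Real.sqrt (4 * α * vmin * (1 + vmin) + 1) - (2 * α * (1 + vmax) * vmin + 1))) :=
  closed_form_generic_general vmin vmax α X0 h1 h2 hα
end

section
/- If 0 ≤ α < 1/(|v_min|(2+v_max+v_min)), then X(v,k) > 0 for all k ≤ 3 and all paths v with v_min ≤ v(j) ≤ v_max for j = 0, 1, 2. -/
/-!
Unrolling the recursion, `X(v,2) = X₀ (1 + α s₂)` and `X(v,3) = X₀ (1 + α s₃)` with
`s₂ = (1 + v 0) v 1` and `s₃ = s₂ + (1 + v 1) v 2`. For values in `[m, M]` with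
`-1 ≤ m ≤ 0 ≤ M` both sums are bounded below by `m (2 + M + m) = -|m| (2 + M + m)`,
so the bound on `α` keeps `1 + α s₂` and `1 + α s₃` positive.
-/

open Set

section Unrolling

variable (α X0 : ℝ) (v : ℕ → ℝ)

theorem accountX_two : accountX α X0 v 2 = X0 * (1 + α * ((1 + v 0) * v 1)) := by
  simp only [accountX]
  ring

theorem accountX_three :
    accountX α X0 v 3 = X0 * (1 + α * ((1 + v 0) * v 1 + (1 + v 1) * v 2)) := by
  simp only [accountX]
  ring

end Unrolling

section LowerBounds

variable {m M a b c : ℝ}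

theorem le_one_add_mul_of_mem_Icc (hm1 : -1 ≤ m) (hm0 : m ≤ 0)
    (ha : a ∈ Icc m M) (hb : b ∈ Icc m M) :
    m * (2 + M + m) ≤ (1 + a) * b :=
  calc m * (2 + M + m) = (1 + M) * m + m * (1 + m) := by ring
    _ ≤ (1 + M) * m := by nlinarith
    _ ≤ (1 + a) * m := by nlinarith [ha.2]
    _ ≤ (1 + a) * b := by nlinarith [ha.1, hb.1]

theorem le_one_add_mul_add_one_add_mul_of_mem_Icc (hm1 : -1 ≤ m) (hm0 : m ≤ 0) (hM : 0 ≤ M)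
    (ha : a ∈ Icc m M) (hb : b ∈ Icc m M) (hc : c ∈ Icc m M) :
    m * (2 + M + m) ≤ (1 + a) * b + (1 + b) * c := by
  obtain ⟨ha₁, ha₂⟩ := ha
  obtain ⟨hb₁, hb₂⟩ := hb
  have hc_min : (1 + a) * b + (1 + b) * m ≤ (1 + a) * b + (1 + b) * c := by
    nlinarith [hc.1]
  -- `(1 + a) b + (1 + b) m = b (1 + a + m) + m` is linear in `b`; check both endpoints.
  rcases le_total 0 (1 + a + m) with hs | hs
  · nlinarith [mul_nonneg (sub_nonneg.2 hb₁) hs]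
  · nlinarith [mul_nonneg (sub_nonneg.2 hb₂) (neg_nonneg.2 hs),
      mul_nonneg (sub_nonneg.2 ha₁) hM]

end LowerBounds

theorem one_add_mul_pos_of_le {α m M s : ℝ} (hm0 : m ≤ 0) (hα0 : 0 ≤ α)
    (hα : α < 1 / (|m| * (2 + M + m))) (hs : m * (2 + M + m) ≤ s) : 0 < 1 + α * s := by
  have hd : 0 < |m| * (2 + M + m) := by
    by_contra! hd
    exact (hα0.trans_lt hα).not_ge (one_div_nonpos.2 hd)
  have hαd : α * (|m| * (2 + M + m)) < 1 := (lt_div_iff₀ hd).1 hα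
  rw [abs_of_nonpos hm0] at hαd
  nlinarith [mul_le_mul_of_nonneg_left hs hα0]

/-- If `0 ≤ α < 1/(|v_min|(2+v_max+v_min))`, then `X(v,k) > 0` for all `k ≤ 3`
and all paths `v` with `v_min ≤ v(j) ≤ v_max` for `j = 0, 1, 2`. -/
theorem positivity_up_to_three (vmin vmax α X0 : ℝ)
    (h1 : -1 < vmin) (h2 : vmin < 0) (h3 : 0 < vmax) (hX0 : 0 < X0)
    (hα0 : 0 ≤ α) (hα : α < 1 / (|vmin| * (2 + vmax + vmin))) :
    ∀ v : ℕ → ℝ, (∀ j < 3, vmin ≤ v j ∧ v j ≤ vmax) →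
      ∀ k ≤ 3, 0 < accountX α X0 v k := by
  intro v hv k hk
  have hv0 : v 0 ∈ Icc vmin vmax := hv 0 (by norm_num)
  have hv1 : v 1 ∈ Icc vmin vmax := hv 1 (by norm_num)
  have hv2 : v 2 ∈ Icc vmin vmax := hv 2 (by norm_num)
  interval_cases k
  · exact hX0
  · exact hX0
  · rw [accountX_two]
    exact mul_pos hX0 <| one_add_mul_pos_of_le h2.le hα0 hα <|
      le_one_add_mul_of_mem_Icc h1.le h2.le hv0 hv1
  · rw [accountX_three]
    exact mul_pos hX0 <| one_add_mul_pos_of_le h2.le hα0 hα <|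
      le_one_add_mul_add_one_add_mul_of_mem_Icc h1.le h2.le h3.le hv0 hv1 hv2
end

section
/- Define α_+ := (v_max − v_min)/(|v_min|(1+v_max)²) if v_max > 1+2v_min, and α_+ := 1/(4|v_min|(1+v_min)) if v_max ≤ 1+2v_min. Then α_+ < 1/(|v_min|(2+v_max+v_min)). -/
/-! With `a = 1 + v_max` and `b = 1 + v_min` one has `0 < b < 1 < a`, `v_max - v_min = a - b` and
`2 + v_max + v_min = a + b`. In the first case the claim is `(a - b)(a + b) = a² - b² < a²`; in the
second, `v_max ≤ 1 + 2 v_min` reads `a ≤ 2b`, so `a + b ≤ 3b < 4b`. -/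

lemma sub_div_mul_sq_lt_one_div_mul_add {a b c : ℝ} (ha : 0 < a) (hb : 0 < b) (hc : 0 < c) :
    (a - b) / (c * a ^ 2) < 1 / (c * (a + b)) := by
  rw [div_lt_div_iff₀ (by positivity) (by positivity)]
  calc (a - b) * (c * (a + b)) = c * a ^ 2 - c * b ^ 2 := by ring
    _ < c * a ^ 2 := by nlinarith [mul_pos hc (pow_pos hb 2)]
    _ = 1 * (c * a ^ 2) := (one_mul _).symm

lemma one_div_four_mul_lt_one_div_mul_add {a b c : ℝ} (ha : 0 < a) (hb : 0 < b) (hc : 0 < c)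
    (hab : a ≤ 2 * b) : 1 / (4 * c * b) < 1 / (c * (a + b)) := by
  apply one_div_lt_one_div_of_lt (by positivity)
  calc c * (a + b) < c * (4 * b) := mul_lt_mul_of_pos_left (by linarith) hc
    _ = 4 * c * b := by ring

/-- The threshold `α_+` is smaller than `α_max(3) = 1/(|v_min|(2+v_max+v_min))`. -/
theorem alpha_plus_lt_alpha_max_three (vmin vmax : ℝ)
    (h1 : -1 < vmin) (h2 : vmin < 0) (h3 : 0 < vmax) :
    (if vmax > 1 + 2 * vmin then (vmax - vmin) / (|vmin| * (1 + vmax) ^ 2)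
      else 1 / (4 * |vmin| * (1 + vmin))) <
      1 / (|vmin| * (2 + vmax + vmin)) := by
  have ha : 0 < 1 + vmax := by linarith
  have hb : 0 < 1 + vmin := by linarith
  have hc : 0 < |vmin| := abs_pos.mpr h2.ne
  have hsum : 2 + vmax + vmin = (1 + vmax) + (1 + vmin) := by ring
  rw [hsum]
  split_ifs with hcase
  · have hdiff : vmax - vmin = (1 + vmax) - (1 + vmin) := by ring
    rw [hdiff]
    exact sub_div_mul_sq_lt_one_div_mul_add ha hb hc
  · exact one_div_four_mul_lt_one_div_mul_add ha hb hc (by linarith)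
end

section
/- Fix N ≥ 0 and k ≤ N. For every admissible partial path v ∈ V^N there exists an extreme path w ∈ V^N (i.e., a partial path with w(j) ∈ {v_min, v_max} for each j = 0,…,N−1) such that X(w,k) ≤ X(v,k). Consequently, X(v,k) > 0 for all v ∈ V^N and all k ≤ N if and only if X(w,k) > 0 for all extreme paths w and all k ≤ N. -/
/-!
`X(v,k)` is affine in each single coordinate `v j`: in the recursion
`X(k+2) = X(k+1) + α (1 + v k) v (k+1) X(k)`, the factor `X(k)` only involves `v i` for `i < k`,
so no product of two terms depending on the same coordinate ever occurs. An affine function of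
`v j` on `[v_min, v_max]` is minimal at an endpoint, so the coordinates can be pushed to the
extremes one at a time without increasing `X(v,k)`.
-/

open Function Set

theorem accountX_congr {α X0 : ℝ} {v v' : ℕ → ℝ} {m : ℕ} (h : ∀ i < m, v i = v' i) :
    accountX α X0 v m = accountX α X0 v' m := by
  induction m using Nat.twoStepInduction with
  | zero => rfl
  | one => rfl
  | more k ih₀ ih₁ =>
    simp only [accountX]
    rw [ih₀ fun i hi => h i (by omega), ih₁ fun i hi => h i (by omega),
      h k (by omega), h (k + 1) (by omega)]

theorem accountX_update_of_le {α X0 : ℝ} (v : ℕ → ℝ) {j m : ℕ} (hm : m ≤ j) (t : ℝ) :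
    accountX α X0 (update v j t) m = accountX α X0 v m :=
  accountX_congr fun _ hi => update_of_ne (by omega) _ _

theorem accountX_update_eq_add_mul (α X0 : ℝ) (v : ℕ → ℝ) (j k : ℕ) :
    ∃ a b : ℝ, ∀ t, accountX α X0 (update v j t) k = a + b * t := by
  induction k using Nat.twoStepInduction with
  | zero => exact ⟨X0, 0, fun t => by simp [accountX]⟩
  | one => exact ⟨X0, 0, fun t => by simp [accountX]⟩
  | more k ih₀ ih₁ =>
    simp only [accountX]
    obtain ⟨a₁, b₁, h₁⟩ := ih₁
    by_cases hjk : j = k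
    · subst hjk
      refine ⟨a₁ + α * v (j + 1) * accountX α X0 v j,
        b₁ + α * v (j + 1) * accountX α X0 v j, fun t => ?_⟩
      rw [h₁, accountX_update_of_le v le_rfl, update_self, update_of_ne (by omega)]
      ring
    by_cases hjk₁ : j = k + 1
    · subst hjk₁
      refine ⟨accountX α X0 v (k + 1), α * (1 + v k) * accountX α X0 v k, fun t => ?_⟩
      rw [accountX_update_of_le v le_rfl, accountX_update_of_le v (by omega), update_self,
        update_of_ne (by omega)]
      ring
    obtain ⟨a₀, b₀, h₀⟩ := ih₀
    refine ⟨a₁ + α * (1 + v k) * v (k + 1) * a₀, b₁ + α * (1 + v k) * v (k + 1) * b₀,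
      fun t => ?_⟩
    rw [h₀, h₁, update_of_ne (Ne.symm hjk), update_of_ne (Ne.symm hjk₁)]
    ring

theorem exists_endpoint_le_add_mul (a b x y : ℝ) :
    ∃ s, (s = x ∨ s = y) ∧ ∀ t ∈ Icc x y, a + b * s ≤ a + b * t := by
  rcases le_or_gt 0 b with hb | hb
  · exact ⟨x, Or.inl rfl, fun t ht => by nlinarith [ht.1]⟩
  · exact ⟨y, Or.inr rfl, fun t ht => by nlinarith [ht.2]⟩

theorem mem_Icc_of_eq_or_eq {x y s : ℝ} (hxy : x ≤ y) (hs : s = x ∨ s = y) : s ∈ Icc x y := by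
  rcases hs with rfl | rfl
  exacts [left_mem_Icc.2 hxy, right_mem_Icc.2 hxy]

theorem exists_extreme_update_le (α X0 : ℝ) (v : ℕ → ℝ) (j k : ℕ) (x y : ℝ) :
    ∃ s, (s = x ∨ s = y) ∧
      ∀ t ∈ Icc x y, accountX α X0 (update v j s) k ≤ accountX α X0 (update v j t) k := by
  obtain ⟨a, b, hab⟩ := accountX_update_eq_add_mul α X0 v j k
  obtain ⟨s, hs, hmin⟩ := exists_endpoint_le_add_mul a b x y
  exact ⟨s, hs, fun t ht => by simpa only [hab] using hmin t ht⟩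

theorem exists_extreme_le_of_forall_mem_Icc (α X0 : ℝ) {x y : ℝ} (hxy : x ≤ y) (k n : ℕ)
    {v : ℕ → ℝ} (hv : ∀ j, v j ∈ Icc x y) :
    ∃ w : ℕ → ℝ, (∀ j, w j ∈ Icc x y) ∧ (∀ j < n, w j = x ∨ w j = y) ∧
      accountX α X0 w k ≤ accountX α X0 v k := by
  induction n with
  | zero => exact ⟨v, hv, fun j hj => absurd hj (Nat.not_lt_zero j), le_rfl⟩
  | succ n ih =>
    obtain ⟨w, hw, hwn, hwv⟩ := ih
    obtain ⟨s, hs, hmin⟩ := exists_extreme_update_le α X0 w n k x y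
    refine ⟨update w n s, (forall_update_iff w fun j r => r ∈ Icc x y).2
      ⟨mem_Icc_of_eq_or_eq hxy hs, fun j _ => hw j⟩, fun j hj => ?_, ?_⟩
    · rcases Nat.lt_succ_iff_lt_or_eq.1 hj with hj | rfl
      · rw [update_of_ne hj.ne]
        exact hwn j hj
      · rwa [update_self]
    · calc accountX α X0 (update w n s) k ≤ accountX α X0 (update w n (w n)) k := hmin _ (hw n)
        _ = accountX α X0 w k := by rw [update_eq_self]
        _ ≤ accountX α X0 v k := hwv

theorem exists_extreme_le (α X0 : ℝ) {x y : ℝ} (hxy : x ≤ y) {N k : ℕ} (hk : k ≤ N)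
    {v : ℕ → ℝ} (hv : ∀ j < N, v j ∈ Icc x y) :
    ∃ w : ℕ → ℝ, (∀ j < N, w j = x ∨ w j = y) ∧ accountX α X0 w k ≤ accountX α X0 v k := by
  let v' : ℕ → ℝ := fun j => if j < N then v j else x
  have hv' : ∀ j, v' j ∈ Icc x y := fun j => by
    by_cases hj : j < N
    · simpa only [v', if_pos hj] using hv j hj
    · simpa only [v', if_neg hj] using left_mem_Icc.2 hxy
  have hv'v : accountX α X0 v' k = accountX α X0 v k :=
    accountX_congr fun i hi => if_pos (by omega)
  obtain ⟨w, -, hw, hwv⟩ := exists_extreme_le_of_forall_mem_Icc α X0 hxy k N hv'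
  exact ⟨w, hw, hwv.trans_eq hv'v⟩

theorem extreme_path_reduction_general (vmin vmax α X0 : ℝ)
    (h2 : vmin < 0) (h3 : 0 < vmax)
    (N k : ℕ) (hk : k ≤ N) :
    (∀ v : ℕ → ℝ, (∀ j < N, vmin ≤ v j ∧ v j ≤ vmax) →
      ∃ w : ℕ → ℝ, (∀ j < N, w j = vmin ∨ w j = vmax) ∧
        accountX α X0 w k ≤ accountX α X0 v k) ∧
    ((∀ v : ℕ → ℝ, (∀ j < N, vmin ≤ v j ∧ v j ≤ vmax) →
        ∀ k' ≤ N, 0 < accountX α X0 v k') ↔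
      (∀ w : ℕ → ℝ, (∀ j < N, w j = vmin ∨ w j = vmax) →
        ∀ k' ≤ N, 0 < accountX α X0 w k')) := by
  have hle : vmin ≤ vmax := h2.le.trans h3.le
  refine ⟨fun v hv => exists_extreme_le α X0 hle hk hv, ⟨?_, ?_⟩⟩
  · intro hpos w hw
    exact hpos w fun j hj => mem_Icc_of_eq_or_eq hle (hw j hj)
  · intro hpos v hv k' hk'
    obtain ⟨w, hw, hwv⟩ := exists_extreme_le α X0 hle hk' hv
    exact (hpos w hw k' hk').trans_le hwv

/-- Extreme-path reduction: for fixed `N` and `k ≤ N`, every admissible partial path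
`v ∈ V^N` is dominated (from below, at stage `k`) by some extreme path `w`, i.e. one
with `w(j) ∈ {v_min, v_max}` for `j < N`; consequently, positivity of `X(v,k)` for
all `v ∈ V^N` and `k ≤ N` is equivalent to positivity along all extreme paths. -/
theorem extreme_path_reduction (vmin vmax α X0 : ℝ)
    (h1 : -1 < vmin) (h2 : vmin < 0) (h3 : 0 < vmax) (hX0 : 0 < X0)
    (hα0 : 0 ≤ α) (N k : ℕ) (hk : k ≤ N) :
    (∀ v : ℕ → ℝ, (∀ j < N, vmin ≤ v j ∧ v j ≤ vmax) →
      ∃ w : ℕ → ℝ, (∀ j < N, w j = vmin ∨ w j = vmax) ∧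
        accountX α X0 w k ≤ accountX α X0 v k) ∧
    ((∀ v : ℕ → ℝ, (∀ j < N, vmin ≤ v j ∧ v j ≤ vmax) →
        ∀ k' ≤ N, 0 < accountX α X0 v k') ↔
      (∀ w : ℕ → ℝ, (∀ j < N, w j = vmin ∨ w j = vmax) →
        ∀ k' ≤ N, 0 < accountX α X0 w k')) :=
  extreme_path_reduction_general vmin vmax α X0 h2 h3 N k hk
end
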